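/- Let A and B be unital algebras over a commutative ring R, M a faithful (A,B)-bimodule, and T = Tri(A,M,B) the triangular algebra. Then every bijective Jordan triple map from T onto an arbitrary ring R' is additive. -/
import Mathlib


/-- The triangular algebra `Tri(A, M, B)`: formal matrices `[[a, m], [0, b]]` with
`a ∈ A`, `m ∈ M`, `b ∈ B`, under the usual matrix operations. -/
@[ext]
structure Tri (A M B : Type*) where
  a : A
  m : M
  b : B

namespace Tri

variable {A M B : Type*}

section AddGroup

variable [AddCommGroup A] [AddCommGroup M] [AddCommGroup B]

instance : Add (Tri A M B) := ⟨fun x y => ⟨x.a + y.a, x.m + y.m, x.b + y.b⟩⟩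
instance : Zero (Tri A M B) := ⟨⟨0, 0, 0⟩⟩
instance : Neg (Tri A M B) := ⟨fun x => ⟨-x.a, -x.m, -x.b⟩⟩

@[simp] theorem add_a (x y : Tri A M B) : (x + y).a = x.a + y.a := rfl
@[simp] theorem add_m (x y : Tri A M B) : (x + y).m = x.m + y.m := rfl
@[simp] theorem add_b (x y : Tri A M B) : (x + y).b = x.b + y.b := rfl
@[simp] theorem zero_a : (0 : Tri A M B).a = 0 := rfl
@[simp] theorem zero_m : (0 : Tri A M B).m = 0 := rfl
@[simp] theorem zero_b : (0 : Tri A M B).b = 0 := rfl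
@[simp] theorem neg_a (x : Tri A M B) : (-x).a = -x.a := rfl
@[simp] theorem neg_m (x : Tri A M B) : (-x).m = -x.m := rfl
@[simp] theorem neg_b (x : Tri A M B) : (-x).b = -x.b := rfl

instance : AddCommGroup (Tri A M B) where
  add_assoc x y z := by ext <;> simp [add_assoc]
  zero_add x := by ext <;> simp
  add_zero x := by ext <;> simp
  nsmul := nsmulRec
  zsmul := zsmulRec
  neg_add_cancel x := by ext <;> simp
  add_comm x y := by ext <;> simp [add_comm]

end AddGroup

section Mul

variable [NonUnitalRing A] [NonUnitalRing B] [AddCommGroup M]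
  [SMul A M] [SMul Bᵐᵒᵖ M]

/-- Multiplication of formal upper-triangular matrices:
`[[a, m], [0, b]] * [[a', m'], [0, b']] = [[a * a', a • m' + m • b'], [0, b * b']]`,
where `m • b'` is the right action of `B`, encoded via `Bᵐᵒᵖ`. -/
instance : Mul (Tri A M B) :=
  ⟨fun x y => ⟨x.a * y.a, x.a • y.m + MulOpposite.op y.b • x.m, x.b * y.b⟩⟩

end Mul

/-- The embedding of `A` as the corner `T₁₁` of the triangular algebra. -/
def e11 [Zero M] [Zero B] (a : A) : Tri A M B := ⟨a, 0, 0⟩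

/-- The embedding of `M` as the corner `T₁₂` of the triangular algebra. -/
def e12 [Zero A] [Zero B] (m : M) : Tri A M B := ⟨0, m, 0⟩

/-- The embedding of `B` as the corner `T₂₂` of the triangular algebra. -/
def e22 [Zero A] [Zero M] (b : B) : Tri A M B := ⟨0, 0, b⟩

end Tri

/-- `M` is an `(A, B)`-bimodule (left `A`-action, right `B`-action encoded via `Bᵐᵒᵖ`)
compatible with the `R`-module structures, where `A` and `B` are (possibly non-unital)
algebras over the commutative ring `R`. -/
class TriBimodule (R A M B : Type*) [CommRing R]
    [NonUnitalRing A] [NonUnitalRing B] [AddCommGroup M]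
    [Module R A] [Module R B] [Module R M]
    [SMul A M] [SMul Bᵐᵒᵖ M] : Prop where
  smul_add_left : ∀ (a : A) (m m' : M), a • (m + m') = a • m + a • m'
  add_smul_left : ∀ (a a' : A) (m : M), (a + a') • m = a • m + a' • m
  mul_smul_left : ∀ (a a' : A) (m : M), (a * a') • m = a • (a' • m)
  smul_add_right : ∀ (b : Bᵐᵒᵖ) (m m' : M), b • (m + m') = b • m + b • m'
  add_smul_right : ∀ (b b' : Bᵐᵒᵖ) (m : M), (b + b') • m = b • m + b' • m
  mul_smul_right : ∀ (b b' : Bᵐᵒᵖ) (m : M), (b * b') • m = b • (b' • m)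
  smul_smul_comm : ∀ (a : A) (b : Bᵐᵒᵖ) (m : M), a • (b • m) = b • (a • m)
  rsmul_smul_left : ∀ (r : R) (a : A) (m : M), (r • a) • m = r • (a • m)
  rsmul_smul_right : ∀ (r : R) (b : Bᵐᵒᵖ) (m : M), (r • b) • m = r • (b • m)



section Aux

variable {A M B : Type*} [NonUnitalRing A] [NonUnitalRing B] [AddCommGroup M]
  [SMul A M] [SMul Bᵐᵒᵖ M]

@[simp] theorem Tri.mul_a' (x y : Tri A M B) : (x * y).a = x.a * y.a := rfl
@[simp] theorem Tri.mul_m' (x y : Tri A M B) :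
    (x * y).m = x.a • y.m + MulOpposite.op y.b • x.m := rfl
@[simp] theorem Tri.mul_b' (x y : Tri A M B) : (x * y).b = x.b * y.b := rfl

end Aux

section Aux2

variable {A M B : Type*}

@[simp] theorem Tri.mk_a' (a : A) (m : M) (b : B) : (Tri.mk a m b).a = a := rfl
@[simp] theorem Tri.mk_m' (a : A) (m : M) (b : B) : (Tri.mk a m b).m = m := rfl
@[simp] theorem Tri.mk_b' (a : A) (m : M) (b : B) : (Tri.mk a m b).b = b := rfl

@[simp] theorem Tri.mk_zero' [AddCommGroup A] [AddCommGroup M] [AddCommGroup B] :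
    (⟨0, 0, 0⟩ : Tri A M B) = 0 := rfl

end Aux2

theorem jordanTriple_bijective_additive_of_unital
    {R A M B R' : Type*} [CommRing R]
    [Ring A] [Ring B] [Algebra R A] [Algebra R B]
    [AddCommGroup M] [Module R M] [Module A M] [Module Bᵐᵒᵖ M]
    [SMulCommClass A Bᵐᵒᵖ M] [IsScalarTower R A M] [IsScalarTower R Bᵐᵒᵖ M]
    (hfaithA : ∀ a : A, (∀ m : M, a • m = 0) → a = 0)
    (hfaithB : ∀ b : B, (∀ m : M, MulOpposite.op b • m = 0) → b = 0)
    [Ring R'] (ψ : Tri A M B → R')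
    (hbij : Function.Bijective ψ)
    (htriple : ∀ x y z : Tri A M B, ψ (x * y * z + z * y * x) = ψ x * ψ y * ψ z + ψ z * ψ y * ψ x) :
    ∀ s t : Tri A M B, ψ (s + t) = ψ s + ψ t := by
  obtain ⟨hinj, hsurj⟩ := hbij
  -- `ψ 0 = 0`
  have h0 : ψ 0 = 0 := by
    obtain ⟨t0, ht0⟩ := hsurj 0
    have h := htriple 0 0 t0
    have hz : (0 : Tri A M B) * 0 * t0 + t0 * 0 * 0 = 0 := by ext <;> simp
    rw [hz, ht0] at h
    simpa using h
  -- corner-extracting triple products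
  have comp1 : ∀ w : Tri A M B,
      (⟨1,0,0⟩ : Tri A M B) * w * ⟨0,0,1⟩ + (⟨0,0,1⟩ : Tri A M B) * w * ⟨1,0,0⟩
        = ⟨0, w.m, 0⟩ := by
    intro w; ext <;> simp
  have comp2 : ∀ (n : M) (w : Tri A M B),
      (⟨1,0,0⟩ : Tri A M B) * w * ⟨0,n,0⟩ + (⟨0,n,0⟩ : Tri A M B) * w * ⟨1,0,0⟩
        = ⟨0, w.a • n, 0⟩ := by
    intro n w; ext <;> simp
  have comp3 : ∀ (n : M) (w : Tri A M B),
      (⟨0,0,1⟩ : Tri A M B) * w * ⟨0,n,0⟩ + (⟨0,n,0⟩ : Tri A M B) * w * ⟨0,0,1⟩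
        = ⟨0, MulOpposite.op w.b • n, 0⟩ := by
    intro n w; ext <;> simp
  -- the master determination lemma
  have master : ∀ u s t : Tri A M B, ψ u = ψ s + ψ t →
      (ψ ⟨0, s.m, 0⟩ + ψ ⟨0, t.m, 0⟩ = ψ ⟨0, s.m + t.m, 0⟩) →
      (∀ n : M, ψ ⟨0, s.a • n, 0⟩ + ψ ⟨0, t.a • n, 0⟩ = ψ ⟨0, (s.a + t.a) • n, 0⟩) →
      (∀ n : M, ψ ⟨0, MulOpposite.op s.b • n, 0⟩ + ψ ⟨0, MulOpposite.op t.b • n, 0⟩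
          = ψ ⟨0, MulOpposite.op (s.b + t.b) • n, 0⟩) →
      u = s + t := by
    intro u s t hu hcm hca hcb
    have key : ∀ x y : Tri A M B,
        ψ (x * u * y + y * u * x)
          = ψ (x * s * y + y * s * x) + ψ (x * t * y + y * t * x) := by
      intro x y
      rw [htriple x u y, htriple x s y, htriple x t y, hu]
      noncomm_ring
    have hm : u.m = s.m + t.m := by
      have h := key ⟨1,0,0⟩ ⟨0,0,1⟩
      rw [comp1 u, comp1 s, comp1 t, hcm] at h
      exact congrArg Tri.m (hinj h)
    have ha : u.a = s.a + t.a := by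
      have hn : ∀ n : M, (u.a - (s.a + t.a)) • n = 0 := by
        intro n
        have h := key ⟨1,0,0⟩ ⟨0,n,0⟩
        rw [comp2 n u, comp2 n s, comp2 n t, hca n] at h
        have h' : u.a • n = (s.a + t.a) • n := congrArg Tri.m (hinj h)
        rw [sub_smul, h', sub_self]
      exact sub_eq_zero.mp (hfaithA _ hn)
    have hb : u.b = s.b + t.b := by
      have hn : ∀ n : M, MulOpposite.op (u.b - (s.b + t.b)) • n = 0 := by
        intro n
        have h := key ⟨0,0,1⟩ ⟨0,n,0⟩
        rw [comp3 n u, comp3 n s, comp3 n t, hcb n] at h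
        have h' : MulOpposite.op u.b • n = MulOpposite.op (s.b + t.b) • n :=
          congrArg Tri.m (hinj h)
        rw [MulOpposite.op_sub, sub_smul, h', sub_self]
      exact sub_eq_zero.mp (hfaithB _ hn)
    ext <;> simp [ha, hm, hb]
  -- additivity of a `T₁₁` corner and a `T₁₂` corner
  have L3a : ∀ (a : A) (m : M),
      ψ (⟨a, m, 0⟩ : Tri A M B) = ψ ⟨a, 0, 0⟩ + ψ ⟨0, m, 0⟩ := by
    intro a m
    obtain ⟨u, hu⟩ := hsurj (ψ (⟨a,0,0⟩ : Tri A M B) + ψ ⟨0,m,0⟩)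
    have h := master u ⟨a,0,0⟩ ⟨0,m,0⟩ hu (by simp [h0]) (fun n => by simp [h0])
      (fun n => by simp [h0])
    have he : ((⟨a,0,0⟩ : Tri A M B) + ⟨0,m,0⟩) = ⟨a, m, 0⟩ := by ext <;> simp
    rw [h, he] at hu
    exact hu
  -- additivity of a `T₁₂` corner and a `T₂₂` corner
  have L3b : ∀ (m : M) (b : B),
      ψ (⟨0, m, b⟩ : Tri A M B) = ψ ⟨0, m, 0⟩ + ψ ⟨0, 0, b⟩ := by
    intro m b
    obtain ⟨u, hu⟩ := hsurj (ψ (⟨0,m,0⟩ : Tri A M B) + ψ ⟨0,0,b⟩)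
    have h := master u ⟨0,m,0⟩ ⟨0,0,b⟩ hu (by simp [h0]) (fun n => by simp [h0])
      (fun n => by simp [h0])
    have he : ((⟨0,m,0⟩ : Tri A M B) + ⟨0,0,b⟩) = ⟨0, m, b⟩ := by ext <;> simp
    rw [h, he] at hu
    exact hu
  -- additivity on the corner `T₁₂`
  have L2 : ∀ m m' : M,
      ψ (⟨0, m + m', 0⟩ : Tri A M B) = ψ ⟨0, m, 0⟩ + ψ ⟨0, m', 0⟩ := by
    intro m m'
    have hX := L3a 1 m
    have hY := L3b m' 1
    have main := htriple ⟨1,m,0⟩ ⟨0,m',1⟩ ⟨1,0,1⟩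
    have e0 : (⟨1,m,0⟩ : Tri A M B) * ⟨0,m',1⟩ * ⟨1,0,1⟩
        + (⟨1,0,1⟩ : Tri A M B) * ⟨0,m',1⟩ * ⟨1,m,0⟩ = ⟨0, m + m', 0⟩ := by
      ext <;> simp [add_comm]
    rw [e0, hX, hY] at main
    have t1 := htriple ⟨1,0,0⟩ ⟨0,m',0⟩ ⟨1,0,1⟩
    rw [show (⟨1,0,0⟩ : Tri A M B) * ⟨0,m',0⟩ * ⟨1,0,1⟩
        + (⟨1,0,1⟩ : Tri A M B) * ⟨0,m',0⟩ * ⟨1,0,0⟩ = ⟨0,m',0⟩ from by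
      ext <;> simp] at t1
    have t2 := htriple ⟨1,0,0⟩ ⟨0,0,1⟩ ⟨1,0,1⟩
    rw [show (⟨1,0,0⟩ : Tri A M B) * ⟨0,0,1⟩ * ⟨1,0,1⟩
        + (⟨1,0,1⟩ : Tri A M B) * ⟨0,0,1⟩ * ⟨1,0,0⟩ = 0 from by
      ext <;> simp, h0] at t2
    have t3 := htriple ⟨0,m,0⟩ ⟨0,m',0⟩ ⟨1,0,1⟩
    rw [show (⟨0,m,0⟩ : Tri A M B) * ⟨0,m',0⟩ * ⟨1,0,1⟩
        + (⟨1,0,1⟩ : Tri A M B) * ⟨0,m',0⟩ * ⟨0,m,0⟩ = 0 from by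
      ext <;> simp, h0] at t3
    have t4 := htriple ⟨0,m,0⟩ ⟨0,0,1⟩ ⟨1,0,1⟩
    rw [show (⟨0,m,0⟩ : Tri A M B) * ⟨0,0,1⟩ * ⟨1,0,1⟩
        + (⟨1,0,1⟩ : Tri A M B) * ⟨0,0,1⟩ * ⟨0,m,0⟩ = ⟨0,m,0⟩ from by
      ext <;> simp] at t4
    have expand : ∀ P Q R S W : R',
        (P + Q) * (R + S) * W + W * (R + S) * (P + Q)
          = (P * R * W + W * R * P) + (P * S * W + W * S * P)
            + (Q * R * W + W * R * Q) + (Q * S * W + W * S * Q) := by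
      intros; noncomm_ring
    rw [expand, ← t1, ← t2, ← t3, ← t4] at main
    rw [main]
    abel
  -- the general case
  intro s t
  obtain ⟨u, hu⟩ := hsurj (ψ s + ψ t)
  have h := master u s t hu ((L2 s.m t.m).symm)
    (fun n => by rw [add_smul]; exact (L2 _ _).symm)
    (fun n => by rw [MulOpposite.op_add, add_smul]; exact (L2 _ _).symm)
  rw [h] at hu
  exact hu
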